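/- arXiv:2210.02371 — 7 statements merged into one kernel-verified Lean document; each statement's English description precedes it below -/
import Mathlib

section
/- For all i ≥ 0, the finite product ∏_{j=1}^{i} 1/(1+2^{-2^j}) equals (3/4) · 1/(1 - 2^{-2^{i+1}}). -/
/-- The `k`-th power of a finite word `w` (concatenation of `k` copies). -/
def wpow (w : List Bool) (k : ℕ) : List Bool := (List.replicate k w).flatten

/-- The pair of words `(u_i, v_i)`:  `u_0 = 0`, `v_0 = 1`,
`u_{i+1} = u_i^{m_i} v_i^{l_i}`, `v_{i+1} = u_i^{m_i} v_i^{n_i}`. -/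
def uvSeq (l m n : ℕ → ℕ) : ℕ → List Bool × List Bool
  | 0 => ([false], [true])
  | i + 1 =>
      (wpow (uvSeq l m n i).1 (m i) ++ wpow (uvSeq l m n i).2 (l i),
       wpow (uvSeq l m n i).1 (m i) ++ wpow (uvSeq l m n i).2 (n i))

/-- The substitution `σ_h` : `0 ↦ 0^{m_h} 1^{l_h}`, `1 ↦ 0^{m_h} 1^{n_h}`. -/
def subw (l m n : ℕ → ℕ) (h : ℕ) (w : List Bool) : List Bool :=
  w.flatMap fun c => List.replicate (m h) false ++ List.replicate (if c then n h else l h) true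

/-- `wordIter i h = σ_h σ_{h+1} ⋯ σ_{h+i-1}(0)`. -/
def wordIter (l m n : ℕ → ℕ) : ℕ → ℕ → List Bool
  | 0, _ => [false]
  | i + 1, h => subw l m n h (wordIter l m n i (h + 1))

/-- The infinite word `u^{(h)} = lim_i σ_h ⋯ σ_{h+i-1}(0)`. -/
def limWord (l m n : ℕ → ℕ) (h : ℕ) (k : ℕ) : Bool :=
  (wordIter l m n (k + 1) h).getD k false

/-- `w` is a factor of the infinite word `U`. -/
def IsFactor (U : ℕ → Bool) (w : List Bool) : Prop :=
  ∃ k, w = (List.range w.length).map fun j => U (k + j)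

/-- `σ_0 σ_1 ⋯ σ_{h+i-1}` starting at `h`, applied to `w`. -/
def subComp (l m n : ℕ → ℕ) : ℕ → ℕ → List Bool → List Bool
  | 0, _, w => w
  | i + 1, h, w => subw l m n h (subComp l m n i (h + 1) w)

/-- `\hat{σ}_h(w) = 1^{l_h} σ_h(w) 0^{m_h} 1^{l_h}`. -/
def hatw (l m n : ℕ → ℕ) (h : ℕ) (w : List Bool) : List Bool :=
  List.replicate (l h) true ++ subw l m n h w ++
    List.replicate (m h) false ++ List.replicate (l h) true

/-- `hatComp i h w = \hat{σ}_h ⋯ \hat{σ}_{h+i-1}(w)`. -/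
def hatComp (l m n : ℕ → ℕ) : ℕ → ℕ → List Bool → List Bool
  | 0, _, w => w
  | i + 1, h, w => hatw l m n h (hatComp l m n i (h + 1) w)

/-- The complexity function of the infinite word `U`. -/
noncomputable def complexityFn (U : ℕ → Bool) (nn : ℕ) : ℕ :=
  Set.ncard {w : List Bool | w.length = nn ∧ IsFactor U w}

theorem one_sub_pow_two_pow_succ_eq_prod_Icc {R : Type*} [CommRing R] (a : R) (n : ℕ) :
    1 - a ^ 2 ^ (n + 1) = (∏ j ∈ Finset.Icc 1 n, (1 + a ^ 2 ^ j)) * ((1 + a) * (1 - a)) := by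
  have h := pow_two_pow_sub_pow_two_pow (x := (1 : R)) (y := a) (n + 1)
  rw [Finset.prod_range_succ', Finset.range_eq_Ico,
    Finset.prod_Ico_add' (fun j => 1 ^ 2 ^ j + a ^ 2 ^ j), zero_add,
    Finset.Ico_add_one_right_eq_Icc] at h
  simpa only [one_pow, pow_zero, pow_one, mul_assoc] using h

theorem stmt0 (i : ℕ) :
    ∏ j ∈ Finset.Icc 1 i, (1 + ((2 : ℝ) ^ (2 ^ j))⁻¹)⁻¹
      = (3 / 4) * (1 - ((2 : ℝ) ^ (2 ^ (i + 1)))⁻¹)⁻¹ := by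
  have telescope := one_sub_pow_two_pow_succ_eq_prod_Icc (2⁻¹ : ℝ) i
  simp only [inv_pow] at telescope
  rw [Finset.prod_inv_distrib, telescope, mul_inv]
  ring
end

section
/- For all i ≥ 0, 2 · ∏_{j=1}^{i} 1/(1+2^{-2^j}) ≥ 3/2. -/
lemma prod_eq (i : ℕ) :
    ∏ j ∈ Finset.Icc 1 i, (1 + ((2 : ℝ) ^ (2 ^ j))⁻¹) =
      (4 / 3) * (1 - ((2 : ℝ) ^ (2 ^ (i + 1)))⁻¹) := by
  induction i with
  | zero => norm_num
  | succ n ih =>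
    rw [Finset.prod_Icc_succ_top (by omega), ih]
    have h2 : ((2 : ℝ) ^ (2 ^ (n + 2)))⁻¹ = (((2 : ℝ) ^ (2 ^ (n + 1)))⁻¹) ^ 2 := by
      rw [show (2:ℕ) ^ (n + 2) = 2 ^ (n + 1) * 2 by ring, pow_mul]
      exact (inv_pow _ _).symm
    rw [h2]; ring

theorem stmt1 (i : ℕ) :
    2 * ∏ j ∈ Finset.Icc 1 i, (1 + ((2 : ℝ) ^ (2 ^ j))⁻¹)⁻¹ ≥ 3 / 2 := by
  rw [Finset.prod_inv_distrib, prod_eq]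
  have h1 : (0 : ℝ) < ((2 : ℝ) ^ (2 ^ (i + 1)))⁻¹ := by positivity
  have h4 : (4 : ℝ) ≤ 2 ^ (2 ^ (i + 1)) := by
    calc (4 : ℝ) = 2 ^ 2 := by norm_num
    _ ≤ 2 ^ (2 ^ (i + 1)) := by
        have he : 2 ≤ 2 ^ (i + 1) := by
          calc 2 = 2 ^ 1 := rfl
          _ ≤ 2 ^ (i + 1) := Nat.pow_le_pow_right (by norm_num) (by omega)
        exact pow_le_pow_right₀ (by norm_num : (1:ℝ) ≤ 2) he
  have h2 : ((2 : ℝ) ^ (2 ^ (i + 1)))⁻¹ ≤ 4⁻¹ := by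
    apply inv_anti₀ (by norm_num) h4
  rw [ge_iff_le, le_mul_inv_iff₀ (by nlinarith)]
  nlinarith
end

section
/- For every i ≥ 1, |v_i|/|u_i| ≤ n_{i-1}/l_{i-1}, where u_0 = 0, v_0 = 1, u_{i+1} = u_i^{m_i} v_i^{l_i}, v_{i+1} = u_i^{m_i} v_i^{n_i}. -/
/- Both lengths are affine in `(|u_i|, |v_i|)` with the same term `m_i |u_i|`, so the ratio
`(m_i |u_i| + n_i |v_i|) / (m_i |u_i| + l_i |v_i|)` is a mediant of `1` and `n_i / l_i`. -/

lemma wpow_length (w : List Bool) (k : ℕ) : (wpow w k).length = k * w.length := by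
  simp [wpow]

lemma length_uvSeq_succ_fst (l m n : ℕ → ℕ) (i : ℕ) :
    (uvSeq l m n (i + 1)).1.length =
      m i * (uvSeq l m n i).1.length + l i * (uvSeq l m n i).2.length := by
  simp [uvSeq, wpow_length]

lemma length_uvSeq_succ_snd (l m n : ℕ → ℕ) (i : ℕ) :
    (uvSeq l m n (i + 1)).2.length =
      m i * (uvSeq l m n i).1.length + n i * (uvSeq l m n i).2.length := by
  simp [uvSeq, wpow_length]

lemma add_mul_div_add_mul_le_div {K : Type*} [Field K] [LinearOrder K] [IsStrictOrderedRing K]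
    {c b l n : K} (hc : 0 ≤ c) (hb : 0 ≤ b) (hl : 0 < l) (hln : l ≤ n) :
    (c + n * b) / (c + l * b) ≤ n / l := by
  rcases (add_nonneg hc (mul_nonneg hl.le hb)).eq_or_lt with hden | hden
  · rw [← hden, div_zero]
    exact div_nonneg (hl.le.trans hln) hl.le
  · rw [div_le_div_iff₀ hden hl]
    linarith [mul_le_mul_of_nonneg_left hln hc]

theorem stmt2_general (l m n : ℕ → ℕ) (hlpos : ∀ i, 0 < l i)
    (hlm : ∀ i, l i < m i) (hmn : ∀ i, m i < n i) (i : ℕ) (hi : 1 ≤ i) :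
    ((uvSeq l m n i).2.length : ℝ) / ((uvSeq l m n i).1.length : ℝ)
      ≤ (n (i - 1) : ℝ) / (l (i - 1) : ℝ) := by
  obtain ⟨j, rfl⟩ := Nat.exists_eq_add_of_le' hi
  rw [Nat.add_sub_cancel, length_uvSeq_succ_fst, length_uvSeq_succ_snd]
  push_cast
  exact add_mul_div_add_mul_le_div (by positivity) (by positivity) (by exact_mod_cast hlpos j)
    (by exact_mod_cast ((hlm j).trans (hmn j)).le)

theorem stmt2 (l m n : ℕ → ℕ) (hlmono : StrictMono l) (hmmono : StrictMono m)
    (hnmono : StrictMono n) (hlpos : ∀ i, 0 < l i)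
    (hlm : ∀ i, l i < m i) (hmn : ∀ i, m i < n i) (i : ℕ) (hi : 1 ≤ i) :
    ((uvSeq l m n i).2.length : ℝ) / ((uvSeq l m n i).1.length : ℝ)
      ≤ (n (i - 1) : ℝ) / (l (i - 1) : ℝ) :=
  stmt2_general l m n hlpos hlm hmn i hi
end

section
/- For all i ≥ 1, the proportion of 0's in u_i satisfies |u_i|_0/|u_i| ≥ (1 + l_0/m_0)^{-1} · ∏_{j=1}^{i-1} (1 + (l_j n_{j-1})/(m_j l_{j-1}))^{-1}. -/
lemma wpow_count (w : List Bool) (k : ℕ) : (wpow w k).count false = k * w.count false := by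
  induction k with
  | zero => simp [wpow]
  | succ k ih => simp only [wpow, List.replicate_succ, List.flatten_cons,
      List.count_append] at *; rw [ih]; ring

lemma uv_len_pos (l m n : ℕ → ℕ) (hm : ∀ i, 0 < m i) (i : ℕ) :
    0 < (uvSeq l m n i).1.length ∧ 0 < (uvSeq l m n i).2.length := by
  induction i with
  | zero => simp [uvSeq]
  | succ i ih =>
    simp only [uvSeq, List.length_append, wpow_length]
    constructor <;> exact Nat.add_pos_left (Nat.mul_pos (hm i) ih.1) _

lemma key_nat (l m n : ℕ → ℕ) (hln : ∀ i, l i ≤ n i) (i : ℕ) :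
    l i * (uvSeq l m n (i + 1)).2.length ≤ n i * (uvSeq l m n (i + 1)).1.length := by
  simp only [uvSeq, List.length_append, wpow_length]
  have h := hln i
  set p := (uvSeq l m n i).1.length
  set q := (uvSeq l m n i).2.length
  have e1 : l i * (m i * p + n i * q) = l i * m i * p + n i * l i * q := by ring
  have e2 : n i * (m i * p + l i * q) = n i * m i * p + n i * l i * q := by ring
  rw [e1, e2]
  exact Nat.add_le_add_right (Nat.mul_le_mul (Nat.mul_le_mul h le_rfl) le_rfl) _

theorem stmt4 (l m n : ℕ → ℕ) (hlmono : StrictMono l) (hmmono : StrictMono m)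
    (hnmono : StrictMono n) (hlpos : ∀ i, 0 < l i)
    (hlm : ∀ i, l i < m i) (hmn : ∀ i, m i < n i) (i : ℕ) (hi : 1 ≤ i) :
    (((uvSeq l m n i).1.count false : ℝ) / ((uvSeq l m n i).1.length : ℝ))
      ≥ (1 + (l 0 : ℝ) / (m 0 : ℝ))⁻¹ *
        ∏ j ∈ Finset.Icc 1 (i - 1),
          (1 + ((l j : ℝ) * (n (j - 1) : ℝ)) / ((m j : ℝ) * (l (j - 1) : ℝ)))⁻¹ := by
  have hmpos : ∀ j, 0 < m j := fun j => (hlpos j).trans (hlm j)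
  have hnpos : ∀ j, 0 < n j := fun j => (hmpos j).trans (hmn j)
  have hln : ∀ j, l j ≤ n j := fun j => le_of_lt ((hlm j).trans (hmn j))
  induction i, hi using Nat.le_induction with
  | base =>
    have hc : (uvSeq l m n 1).1.count false = m 0 := by
      simp [uvSeq, List.count_append, wpow_count]
    have hlen : (uvSeq l m n 1).1.length = m 0 + l 0 := by
      simp [uvSeq, List.length_append, wpow_length]
    rw [hc, hlen]
    rw [show (1 : ℕ) - 1 = 0 from rfl, Finset.Icc_eq_empty (by omega), Finset.prod_empty,
      mul_one]
    have h1 : (0:ℝ) < (m 0 : ℝ) := by exact_mod_cast hmpos 0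
    have h2 : (0:ℝ) < (m 0 : ℝ) + (l 0 : ℝ) := by positivity
    have hK : ((1:ℝ) + (l 0 : ℝ) / (m 0 : ℝ))⁻¹ = (m 0 : ℝ) / ((m 0 : ℝ) + (l 0 : ℝ)) := by
      field_simp
    rw [hK]
    push_cast
    exact le_refl _
  | succ i hi1 ih =>
    obtain ⟨i', rfl⟩ : ∃ i', i = i' + 1 := ⟨i - 1, by omega⟩
    set p := (uvSeq l m n (i' + 1)).1.length with hp
    set q := (uvSeq l m n (i' + 1)).2.length with hq
    set c := (uvSeq l m n (i' + 1)).1.count false with hcdef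
    set d := (uvSeq l m n (i' + 1)).2.count false with hddef
    have hppos : 0 < p := (uv_len_pos l m n hmpos (i' + 1)).1
    have hqpos : 0 < q := (uv_len_pos l m n hmpos (i' + 1)).2
    have hkey : l i' * q ≤ n i' * p := key_nat l m n hln i'
    have hcnt : (uvSeq l m n (i' + 1 + 1)).1.count false = m (i' + 1) * c + l (i' + 1) * d := by
      simp [uvSeq, List.count_append, wpow_count, hcdef, hddef]
    have hlen : (uvSeq l m n (i' + 1 + 1)).1.length = m (i' + 1) * p + l (i' + 1) * q := by
      simp [uvSeq, List.length_append, wpow_length, hp, hq]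
    rw [hcnt, hlen, show (i' + 1 + 1) - 1 = i' + 1 from rfl,
      Finset.prod_Icc_succ_top (Nat.le_add_left 1 i'), ← mul_assoc]
    rw [show (i' + 1) - 1 = i' from rfl]
    set K : ℝ := (1 + ((l (i'+1) : ℝ) * (n i' : ℝ)) / ((m (i'+1) : ℝ) * (l i' : ℝ)))⁻¹ with hKdef
    have hM : (0:ℝ) < (m (i'+1) : ℝ) := by exact_mod_cast hmpos _
    have hL : (0:ℝ) < (l (i'+1) : ℝ) := by exact_mod_cast hlpos _
    have hΛ : (0:ℝ) < (l i' : ℝ) := by exact_mod_cast hlpos _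
    have hN : (0:ℝ) < (n i' : ℝ) := by exact_mod_cast hnpos _
    have hP : (0:ℝ) < (p : ℝ) := by exact_mod_cast hppos
    have hQ : (0:ℝ) < (q : ℝ) := by exact_mod_cast hqpos
    have hC : (0:ℝ) ≤ (c : ℝ) := by positivity
    have hD : (0:ℝ) ≤ (d : ℝ) := by positivity
    have hkeyR : (l i' : ℝ) * (q : ℝ) ≤ (n i' : ℝ) * (p : ℝ) := by exact_mod_cast hkey
    have hKpos : 0 < K := by rw [hKdef]; positivity
    have hstep : ((c : ℝ) / (p : ℝ)) * K ≤
        ((m (i'+1) * c + l (i'+1) * d : ℕ) : ℝ) / ((m (i'+1) * p + l (i'+1) * q : ℕ) : ℝ) := by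
      push_cast
      have hK2 : K = ((m (i'+1) : ℝ) * (l i' : ℝ)) /
          ((m (i'+1) : ℝ) * (l i' : ℝ) + (l (i'+1) : ℝ) * (n i' : ℝ)) := by
        rw [hKdef]; field_simp
      rw [hK2, div_mul_div_comm, div_le_div_iff₀ (by positivity) (by positivity)]
      nlinarith [mul_le_mul_of_nonneg_left hkeyR
          (by positivity : (0:ℝ) ≤ (c : ℝ) * (m (i'+1) : ℝ) * (l (i'+1) : ℝ)),
        mul_nonneg (mul_nonneg hL.le hD)
          (by positivity : (0:ℝ) ≤ (p : ℝ) * ((m (i'+1) : ℝ) * (l i' : ℝ) + (l (i'+1) : ℝ) * (n i' : ℝ)))]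
    calc ((1 + (l 0 : ℝ) / (m 0 : ℝ))⁻¹ *
            ∏ j ∈ Finset.Icc 1 i',
              (1 + ((l j : ℝ) * (n (j - 1) : ℝ)) / ((m j : ℝ) * (l (j - 1) : ℝ)))⁻¹) * K
          ≤ ((c : ℝ) / (p : ℝ)) * K := by
            apply mul_le_mul_of_nonneg_right _ hKpos.le
            exact ih
      _ ≤ _ := hstep
end

section
/- The infinite word u = lim u_i is uniformly recurrent: for every n there exists N such that every factor of u of length N contains every factor of u of length n. -/
/-! Write `U_i = σ_0 ⋯ σ_{i-1}(0)` and `V_i = σ_0 ⋯ σ_{i-1}(1)`. Since `l ≤ n`, `U_i` is a prefix of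
`V_i`, and `u = σ_0 ⋯ σ_{i-1}(u^{(i)})` is a concatenation of blocks `U_i` and `V_i`; hence every
factor of `u` of length `|U_i| + |V_i|` contains a block start and with it `U_i`. There are finitely
many factors of length `n₀`, each occurring before some position `K`, so all of them are factors of
the prefix `U_i` of `u` once `i` is large. -/

theorem List.infix_of_forall_prefix_flatMap {α β : Type*} {U : List α} {L : ℕ} {f : β → List α}
    (hU : ∀ c, U <+: f c) (hL : ∀ c, (f c).length ≤ L) (s : List β) {x : List α}
    (hx : x <:+: s.flatMap f) (hlen : L + U.length ≤ x.length) : U <:+: x := by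
  have hshort : x.length ≤ L → U <:+: x := fun h ↦ by
    simp [List.length_eq_zero_iff.mp (by omega : U.length = 0)]
  induction s with
  | nil => exact hshort (by simp [List.infix_nil.mp hx])
  | cons c s ih =>
    obtain ⟨a, b, hab⟩ := hx
    rw [List.flatMap_cons, List.append_assoc, List.append_eq_append_iff] at hab
    rcases hab with ⟨a', hc, hxb⟩ | ⟨a', rfl, hrest⟩
    · -- `x` starts inside the block `f c`, at the beginning of its suffix `a'`
      have ha' : a'.length ≤ L := le_trans (by simp [hc]) (hL c)
      rcases List.append_eq_append_iff.mp hxb with ⟨y, rfl, -⟩ | ⟨y, rfl, hrest⟩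
      · exact hshort (le_trans (by simp) ha')
      · cases s with
        | nil =>
          obtain rfl : y = [] := (List.append_eq_nil_iff.mp hrest.symm).1
          exact hshort (by simpa using ha')
        | cons c' s =>
          have hUy : U <+: y ++ b := hrest ▸ (hU c').trans (List.prefix_append _ _)
          have hy : U.length ≤ y.length := by simp only [List.length_append] at hlen; omega
          exact (List.prefix_of_prefix_length_le hUy (List.prefix_append _ _) hy).isInfix.trans
            (List.suffix_append _ _).isInfix
    · exact ih ⟨a', b, by rw [hrest, List.append_assoc]⟩

theorem infix_of_eq_map_range {U : ℕ → Bool} {W w : List Bool} {k : ℕ}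
    (hw : w = (List.range w.length).map fun j ↦ U (k + j))
    (hW : ∀ j < W.length, W[j]? = some (U j)) (hk : k + w.length ≤ W.length) : w <:+: W := by
  refine List.infix_iff_getElem?.mpr ⟨k, by omega, fun j hj ↦ ?_⟩
  have hwj := congrArg (·[j]?) hw
  simp only [List.getElem?_map, List.getElem?_range hj, List.getElem?_eq_getElem hj] at hwj
  rw [hW _ (by omega), hwj, Nat.add_comm]
  rfl

theorem exists_forall_isFactor_occurs_le (U : ℕ → Bool) (n₀ : ℕ) :
    ∃ K, ∀ v, IsFactor U v → v.length = n₀ →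
      ∃ k ≤ K, v = (List.range v.length).map fun j ↦ U (k + j) := by
  let S := {v : List Bool | v.length = n₀ ∧ IsFactor U v}
  have : Finite S := (List.finite_length_eq Bool n₀).subset fun _ hv ↦ hv.1
  obtain ⟨K, hK⟩ := Finite.bddAbove_range fun v : S ↦ v.2.2.choose
  exact ⟨K, fun v hv hlen ↦ ⟨_, hK ⟨⟨v, hlen, hv⟩, rfl⟩, hv.choose_spec⟩⟩

section Substitution

variable {l m n : ℕ → ℕ}

theorem subw_append (h : ℕ) (a b : List Bool) :
    subw l m n h (a ++ b) = subw l m n h a ++ subw l m n h b :=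
  List.flatMap_append

theorem subw_prefix_subw (h : ℕ) {a b : List Bool} (hab : a <+: b) :
    subw l m n h a <+: subw l m n h b := by
  obtain ⟨t, rfl⟩ := hab
  exact ⟨subw l m n h t, (subw_append h a t).symm⟩

theorem two_mul_length_le_length_subw (hl : ∀ i, 0 < l i) (hm : ∀ i, 0 < m i)
    (hln : ∀ i, l i ≤ n i) (h : ℕ) (w : List Bool) :
    2 * w.length ≤ (subw l m n h w).length := by
  induction w with
  | nil => simp
  | cons c w ih =>
    have := hl h
    have := hm h
    have := hln h
    simp only [subw, List.flatMap_cons, List.length_append, List.length_replicate,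
      List.length_cons] at ih ⊢
    split <;> omega

theorem wordIter_prefix_wordIter_succ (hm : ∀ i, 0 < m i) (i h : ℕ) :
    wordIter l m n i h <+: wordIter l m n (i + 1) h := by
  induction i generalizing h with
  | zero =>
    obtain ⟨k, hk⟩ := Nat.exists_eq_succ_of_ne_zero (hm h).ne'
    simp [wordIter, subw, hk, List.replicate_succ]
  | succ i ih => exact subw_prefix_subw h (ih (h + 1))

theorem wordIter_prefix_wordIter (hm : ∀ i, 0 < m i) {i j : ℕ} (hij : i ≤ j) (h : ℕ) :
    wordIter l m n i h <+: wordIter l m n j h := by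
  induction j, hij using Nat.le_induction with
  | base => exact List.prefix_rfl
  | succ j _ ih => exact ih.trans (wordIter_prefix_wordIter_succ hm j h)

theorem succ_le_length_wordIter (hl : ∀ i, 0 < l i) (hm : ∀ i, 0 < m i)
    (hln : ∀ i, l i ≤ n i) (i h : ℕ) : i + 1 ≤ (wordIter l m n i h).length := by
  induction i generalizing h with
  | zero => simp [wordIter]
  | succ i ih =>
    have := two_mul_length_le_length_subw hl hm hln h (wordIter l m n i (h + 1))
    have := ih (h + 1)
    simp only [wordIter]
    omega

theorem getElem?_wordIter (hl : ∀ i, 0 < l i) (hm : ∀ i, 0 < m i) (hln : ∀ i, l i ≤ n i)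
    {p h j : ℕ} (hj : j < (wordIter l m n p h).length) :
    (wordIter l m n p h)[j]? = some (limWord l m n h j) := by
  have hj' : j < (wordIter l m n (j + 1) h).length := by
    have := succ_le_length_wordIter hl hm hln (j + 1) h
    omega
  rw [List.getElem?_eq_getElem hj, limWord, List.getD_eq_getElem _ _ hj',
    (wordIter_prefix_wordIter hm (le_max_left p (j + 1)) h).getElem hj,
    (wordIter_prefix_wordIter hm (le_max_right p (j + 1)) h).getElem hj']

theorem infix_wordIter_of_eq_map_range (hl : ∀ i, 0 < l i) (hm : ∀ i, 0 < m i)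
    (hln : ∀ i, l i ≤ n i) {h k p : ℕ} {w : List Bool}
    (hw : w = (List.range w.length).map fun j ↦ limWord l m n h (k + j))
    (hp : k + w.length ≤ p + 1) : w <:+: wordIter l m n p h :=
  infix_of_eq_map_range hw (fun _ hj ↦ getElem?_wordIter hl hm hln hj)
    (hp.trans (succ_le_length_wordIter hl hm hln p h))

theorem subComp_eq_flatMap (i h : ℕ) (w : List Bool) :
    subComp l m n i h w = w.flatMap fun c ↦ subComp l m n i h [c] := by
  induction i generalizing h with
  | zero => exact (List.flatMap_singleton' w).symm
  | succ i ih =>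
    rw [subComp, ih, subw, List.flatMap_assoc]
    rfl

theorem subComp_false (i h : ℕ) : subComp l m n i h [false] = wordIter l m n i h := by
  induction i generalizing h with
  | zero => rfl
  | succ i ih => rw [subComp, wordIter, ih]

theorem wordIter_add (t i h : ℕ) :
    wordIter l m n (t + i) h = subComp l m n i h (wordIter l m n t (h + i)) := by
  induction i generalizing h with
  | zero => rfl
  | succ i ih => rw [← Nat.add_assoc, wordIter, ih, subComp, Nat.add_right_comm, Nat.add_assoc]

theorem subComp_false_prefix_true (hln : ∀ i, l i ≤ n i) (i h : ℕ) :
    subComp l m n (i + 1) h [false] <+: subComp l m n (i + 1) h [true] := by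
  induction i generalizing h with
  | zero =>
    refine ⟨List.replicate (n h - l h) true, ?_⟩
    simp [subComp, subw, Nat.add_sub_cancel' (hln h)]
  | succ i ih => exact subw_prefix_subw h (ih (h + 1))

end Substitution

theorem stmt9_general (l m n : ℕ → ℕ) (hlpos : ∀ i, 0 < l i)
    (hlm : ∀ i, l i < m i) (hmn : ∀ i, m i < n i) (n₀ : ℕ) :
    ∃ N : ℕ, ∀ w : List Bool, IsFactor (limWord l m n 0) w → w.length = N →
      ∀ v : List Bool, IsFactor (limWord l m n 0) v → v.length = n₀ → v <:+: w := by
  have hm i : 0 < m i := (hlpos i).trans (hlm i)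
  have hln i : l i ≤ n i := ((hlm i).trans (hmn i)).le
  obtain ⟨K, hK⟩ := exists_forall_isFactor_occurs_le (limWord l m n 0) n₀
  set i := K + n₀ + 1
  set V := subComp l m n i 0 [true]
  have hUV : wordIter l m n i 0 <+: V := by
    rw [← subComp_false]
    exact subComp_false_prefix_true hln (K + n₀) 0
  refine ⟨V.length + (wordIter l m n i 0).length, fun w ⟨kw, hkw⟩ hwlen v hv hvlen ↦ ?_⟩
  obtain ⟨k, hkK, hk⟩ := hK v hv hvlen
  have hvU : v <:+: wordIter l m n i 0 := infix_wordIter_of_eq_map_range hlpos hm hln hk (by omega)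
  have hw : w <:+: (wordIter l m n (kw + w.length) i).flatMap fun c ↦ subComp l m n i 0 [c] := by
    have hsplit := wordIter_add (l := l) (m := m) (n := n) (kw + w.length) i 0
    rw [Nat.zero_add] at hsplit
    rw [← subComp_eq_flatMap, ← hsplit]
    exact infix_wordIter_of_eq_map_range hlpos hm hln hkw (by omega)
  have hblock c : wordIter l m n i 0 <+: subComp l m n i 0 [c] ∧
      (subComp l m n i 0 [c]).length ≤ V.length := by
    cases c
    · rw [subComp_false]
      exact ⟨List.prefix_rfl, hUV.length_le⟩
    · exact ⟨hUV, le_rfl⟩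
  exact hvU.trans (List.infix_of_forall_prefix_flatMap (fun c ↦ (hblock c).1)
    (fun c ↦ (hblock c).2) _ hw hwlen.ge)

theorem stmt9 (l m n : ℕ → ℕ) (hlmono : StrictMono l) (hmmono : StrictMono m)
    (hnmono : StrictMono n) (hlpos : ∀ i, 0 < l i)
    (hlm : ∀ i, l i < m i) (hmn : ∀ i, m i < n i) (n₀ : ℕ) :
    ∃ N : ℕ, ∀ w : List Bool, IsFactor (limWord l m n 0) w → w.length = N →
      ∀ v : List Bool, IsFactor (limWord l m n 0) v → v.length = n₀ → v <:+: w :=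
  stmt9_general l m n hlpos hlm hmn n₀
end

section
/- Let σ be the substitution σ(0) = 0^m 1^l, σ(1) = 0^m 1^n with 0 < l < m < n, \hat{σ}(v) = 1^l σ(v) 0^m 1^l, and λ > 0 a real number. If words v, w satisfy |w|_0 > λ(|v|_0 + 1) and |w|_1 > λ(|v|_1 + 1), then |\hat{σ}(w)|_0 > λ(|\hat{σ}(v)|_0 + 1) and |\hat{σ}(w)|_1 > λ(|\hat{σ}(v)|_1 + 1). -/
lemma count_subw_false (l m n : ℕ) (w : List Bool) :
    (subw (fun _ => l) (fun _ => m) (fun _ => n) 0 w).count false = m * w.length := by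
  induction w with
  | nil => simp [subw]
  | cons c t ih =>
    cases c <;> simp [subw, List.count_append, List.count_replicate,
      Nat.mul_succ] at ih ⊢ <;> omega

lemma count_subw_true (l m n : ℕ) (w : List Bool) :
    (subw (fun _ => l) (fun _ => m) (fun _ => n) 0 w).count true =
      l * w.count false + n * w.count true := by
  induction w with
  | nil => simp [subw]
  | cons c t ih =>
    cases c <;> simp [subw, List.count_append, List.count_replicate,
      Nat.mul_succ] at ih ⊢ <;> omega

lemma count_split (w : List Bool) : w.count false + w.count true = w.length := by
  induction w with
  | nil => simp
  | cons c t ih => cases c <;> simp [List.count_cons] <;> omega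

theorem stmt12 (l m n : ℕ) (hl : 0 < l) (hlm : l < m) (hmn : m < n)
    (lam : ℝ) (hlam : 0 < lam) (v w : List Bool)
    (h0 : (w.count false : ℝ) > lam * ((v.count false : ℝ) + 1))
    (h1 : (w.count true : ℝ) > lam * ((v.count true : ℝ) + 1)) :
    ((hatw (fun _ => l) (fun _ => m) (fun _ => n) 0 w).count false : ℝ) >
        lam * (((hatw (fun _ => l) (fun _ => m) (fun _ => n) 0 v).count false : ℝ) + 1) ∧
      ((hatw (fun _ => l) (fun _ => m) (fun _ => n) 0 w).count true : ℝ) >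
        lam * (((hatw (fun _ => l) (fun _ => m) (fun _ => n) 0 v).count true : ℝ) + 1) := by
  have key : ∀ u : List Bool,
      (hatw (fun _ => l) (fun _ => m) (fun _ => n) 0 u).count false = m * u.length + m ∧
      (hatw (fun _ => l) (fun _ => m) (fun _ => n) 0 u).count true =
        2 * l + (l * u.count false + n * u.count true) := by
    intro u
    constructor <;>
      simp [hatw, List.count_append, List.count_replicate, count_subw_false,
        count_subw_true] <;> ring
  obtain ⟨kwf, kwt⟩ := key w
  obtain ⟨kvf, kvt⟩ := key v
  rw [kwf, kwt, kvf, kvt]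
  have lw := count_split w
  have lv := count_split v
  have hm : (2:ℝ) ≤ (m:ℕ) := by exact_mod_cast (by omega : 2 ≤ m)
  have hn : (l:ℝ) + 1 ≤ (n:ℕ) := by exact_mod_cast (by omega : l + 1 ≤ n)
  have hl' : (1:ℝ) ≤ (l:ℕ) := by exact_mod_cast hl
  have lw' : (w.count false : ℝ) + (w.count true : ℝ) = w.length := by exact_mod_cast lw
  have lv' : (v.count false : ℝ) + (v.count true : ℝ) = v.length := by exact_mod_cast lv
  constructor
  · push_cast
    rw [← lw', ← lv']
    nlinarith [mul_lt_mul_of_pos_left h0 (by linarith : (0:ℝ) < (m:ℕ)),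
      mul_lt_mul_of_pos_left h1 (by linarith : (0:ℝ) < (m:ℕ)),
      mul_nonneg hlam.le (by linarith : (0:ℝ) ≤ (m:ℕ) - 1)]
  · push_cast
    nlinarith [mul_lt_mul_of_pos_left h0 (by linarith : (0:ℝ) < (l:ℕ)),
      mul_lt_mul_of_pos_left h1 (by linarith : (0:ℝ) < (n:ℕ)),
      mul_nonneg hlam.le (by linarith : (0:ℝ) ≤ (n:ℕ) - (l:ℕ) - 1)]
end

section
/- With l_i = 2^{2·2^i+4}, m_i = 2^{8·2^i}, n_i = 2^{10·2^i}, the lengths of the non-ordinary bispecial factors of u interlace: for all i ≥ 0, |b_i| < |c_i| < |a_{i+1}| < |d_i| < |b_{i+1}|, where a_i = \hat{σ}_0⋯\hat{σ}_{i-1}(ε), b_i = \hat{σ}_0⋯\hat{σ}_{i-1}(1^{l_i}), c_i = \hat{σ}_0⋯\hat{σ}_{i-1}(0^{m_i - 1}), d_i = \hat{σ}_0⋯\hat{σ}_{i-1}(1^{n_i - 1}). -/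
/-! The Parikh vector of `σ̂_h(w)` is `((|w| + 1) m_h, |w|₀ l_h + |w|₁ n_h + 2 l_h)`, a strictly
monotone function of the Parikh vector of `w` (componentwise order) as soon as `m_h > 0`. Hence
`σ̂_0 ⋯ σ̂_{i-1}` turns strict Parikh domination of its arguments into a strict length comparison.
This settles `|c_i| < |a_{i+1}|` and `|d_i| < |b_{i+1}|` directly. For `|b_i| < |c_i|` and
`|a_{i+1}| < |d_i|` the arguments are incomparable, but after applying the innermost `σ̂_{i-1}`
they are ordered, by the growth of `l`, `m`, `n`; for `i = 0` the lengths are checked numerically. -/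

open List

section Parikh

variable (l m n : ℕ → ℕ)

def parikh (w : List Bool) : ℕ × ℕ := (w.count false, w.count true)

lemma length_lt_length_of_parikh_lt {u v : List Bool} (huv : parikh u < parikh v) :
    u.length < v.length := by
  rw [← count_false_add_count_true u, ← count_false_add_count_true v]
  rcases Prod.lt_iff.mp huv with ⟨h₁, h₂⟩ | ⟨h₁, h₂⟩ <;> dsimp only [parikh] at h₁ h₂ <;> omega

lemma subw_cons (h : ℕ) (c : Bool) (w : List Bool) :
    subw l m n h (c :: w) =
      (replicate (m h) false ++ replicate (if c then n h else l h) true) ++ subw l m n h w :=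
  rfl

lemma count_false_subw (h : ℕ) (w : List Bool) :
    (subw l m n h w).count false = w.length * m h := by
  induction w with
  | nil => simp [subw]
  | cons c w ih => cases c <;> simp [subw_cons, count_replicate, ih, add_mul, add_comm]

lemma count_true_subw (h : ℕ) (w : List Bool) :
    (subw l m n h w).count true = w.count false * l h + w.count true * n h := by
  induction w with
  | nil => simp [subw]
  | cons c w ih =>
    cases c <;> simp [subw_cons, count_replicate, ih, add_mul, add_assoc, add_comm, add_left_comm]

lemma count_false_hatw (h : ℕ) (w : List Bool) :
    (hatw l m n h w).count false = (w.length + 1) * m h := by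
  simp [hatw, count_replicate, count_false_subw, add_mul]

lemma count_true_hatw (h : ℕ) (w : List Bool) :
    (hatw l m n h w).count true = (subw l m n h w).count true + 2 * l h := by
  simp [hatw, count_replicate, two_mul, add_assoc, add_comm]

lemma length_hatw (h : ℕ) (w : List Bool) :
    (hatw l m n h w).length = (w.length + 1) * m h + (subw l m n h w).count true + 2 * l h := by
  rw [← count_false_add_count_true, count_false_hatw, count_true_hatw]
  ring

variable {l m n}

lemma parikh_hatw_lt_of_length_lt {h : ℕ} {u v : List Bool} (hm : 0 < m h)
    (hlen : u.length < v.length)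
    (hones : (subw l m n h u).count true ≤ (subw l m n h v).count true) :
    parikh (hatw l m n h u) < parikh (hatw l m n h v) := by
  refine Prod.lt_iff.mpr (Or.inl ⟨?_, ?_⟩)
  · simp only [parikh, count_false_hatw]
    exact Nat.mul_lt_mul_of_pos_right (by omega) hm
  · simp only [parikh, count_true_hatw]
    omega

lemma parikh_hatw_lt {h : ℕ} {u v : List Bool} (hm : 0 < m h) (huv : parikh u < parikh v) :
    parikh (hatw l m n h u) < parikh (hatw l m n h v) := by
  obtain ⟨h₀, h₁⟩ := huv.le
  refine parikh_hatw_lt_of_length_lt hm (length_lt_length_of_parikh_lt huv) ?_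
  rw [count_true_subw, count_true_subw]
  gcongr
  exacts [h₀, h₁]

lemma parikh_hatComp_lt (hm : ∀ h, 0 < m h) {u v : List Bool} (huv : parikh u < parikh v)
    (i h : ℕ) : parikh (hatComp l m n i h u) < parikh (hatComp l m n i h v) := by
  induction i generalizing h with
  | zero => exact huv
  | succ i ih => exact parikh_hatw_lt (hm h) (ih (h + 1))

lemma length_hatComp_lt (hm : ∀ h, 0 < m h) {u v : List Bool} (huv : parikh u < parikh v)
    (i h : ℕ) : (hatComp l m n i h u).length < (hatComp l m n i h v).length :=
  length_lt_length_of_parikh_lt (parikh_hatComp_lt hm huv i h)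

lemma hatComp_succ_eq (i h : ℕ) (w : List Bool) :
    hatComp l m n (i + 1) h w = hatComp l m n i h (hatw l m n (i + h) w) := by
  induction i generalizing h with
  | zero => simp [hatComp]
  | succ i ih =>
    rw [hatComp, ih, hatComp, show i + (h + 1) = i + 1 + h by omega]

lemma length_hatComp_succ_lt (hm : ∀ h, 0 < m h) {i h : ℕ} {u v : List Bool}
    (hlen : u.length < v.length)
    (hones : (subw l m n (i + h) u).count true ≤ (subw l m n (i + h) v).count true) :
    (hatComp l m n (i + 1) h u).length < (hatComp l m n (i + 1) h v).length := by
  rw [hatComp_succ_eq, hatComp_succ_eq]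
  exact length_hatComp_lt hm (parikh_hatw_lt_of_length_lt (hm _) hlen hones) i h

lemma length_c_lt_length_a (hm : ∀ h, 0 < m h) (i h : ℕ) :
    (hatComp l m n i h (replicate (m (i + h) - 1) false)).length <
      (hatComp l m n (i + 1) h []).length := by
  rw [hatComp_succ_eq]
  refine length_hatComp_lt hm (Prod.lt_iff.mpr (Or.inl ⟨?_, ?_⟩)) i h
  · simp [parikh, count_false_hatw, hm (i + h)]
  · simp [parikh, count_replicate]

lemma length_d_lt_length_b (hm : ∀ h, 0 < m h) {i h : ℕ} (hl : 0 < l (i + 1 + h)) :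
    (hatComp l m n i h (replicate (n (i + h) - 1) true)).length <
      (hatComp l m n (i + 1) h (replicate (l (i + 1 + h)) true)).length := by
  rw [hatComp_succ_eq]
  refine length_hatComp_lt hm (Prod.lt_iff.mpr (Or.inl ⟨?_, ?_⟩)) i h
  · simp [parikh, count_false_hatw, count_replicate, hm (i + h)]
  · have : n (i + h) ≤ l (i + 1 + h) * n (i + h) := Nat.le_mul_of_pos_left _ hl
    simpa [parikh, count_true_hatw, count_true_subw, count_replicate] using
      (Nat.sub_le _ 1).trans (this.trans (Nat.le_add_right _ _))

end Parikh

section PowersOfTwo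

lemma two_pow_mul_pow_le_pow {x : ℕ} (hx : 2 ≤ x) {a b : ℕ} (hab : a ≤ b) :
    2 ^ (b - a) * x ^ a ≤ x ^ b := by
  rw [← Nat.sub_add_cancel hab, pow_add, Nat.add_sub_cancel]
  exact Nat.mul_le_mul_right _ (Nat.pow_le_pow_left hx _)

variable {l m n : ℕ → ℕ}

lemma exists_eq_pow_of_eq_two_pow (hl : ∀ i, l i = 2 ^ (2 * 2 ^ i + 4))
    (hm : ∀ i, m i = 2 ^ (8 * 2 ^ i)) (hn : ∀ i, n i = 2 ^ (10 * 2 ^ i)) (j : ℕ) :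
    ∃ x, 2 ≤ x ∧ l j = 16 * x ^ 2 ∧ m j = x ^ 8 ∧ n j = x ^ 10 ∧
      l (j + 1) = 16 * x ^ 4 ∧ m (j + 1) = x ^ 16 ∧ n (j + 1) = x ^ 20 := by
  refine ⟨2 ^ 2 ^ j, ?_, ?_⟩
  · calc 2 = 2 ^ 1 := rfl
      _ ≤ 2 ^ 2 ^ j := Nat.pow_le_pow_right two_pos Nat.one_le_two_pow
  · simp only [hl, hm, hn]
    refine ⟨?_, ?_, ?_, ?_, ?_, ?_⟩ <;> ring

lemma length_b_lt_length_c (hl : ∀ i, l i = 2 ^ (2 * 2 ^ i + 4))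
    (hm : ∀ i, m i = 2 ^ (8 * 2 ^ i)) (hn : ∀ i, n i = 2 ^ (10 * 2 ^ i)) (i : ℕ) :
    (hatComp l m n i 0 (replicate (l i) true)).length <
      (hatComp l m n i 0 (replicate (m i - 1) false)).length := by
  rcases i with _ | j
  · simp only [hatComp, length_replicate, hl, hm]
    norm_num
  obtain ⟨x, hx, hl₀, -, hn₀, hl₁, hm₁, -⟩ := exists_eq_pow_of_eq_two_pow hl hm hn j
  have h₁ := two_pow_mul_pow_le_pow hx (show 0 ≤ 4 by norm_num)
  have h₂ := two_pow_mul_pow_le_pow hx (show 2 ≤ 14 by norm_num)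
  have h₃ := two_pow_mul_pow_le_pow hx (show 4 ≤ 16 by norm_num)
  have h₄ := two_pow_mul_pow_le_pow hx (show 14 ≤ 18 by norm_num)
  norm_num at h₁ h₂ h₃ h₄
  refine length_hatComp_succ_lt (fun h => by rw [hm]; positivity) ?_ ?_
  · have : 16 * x ^ 4 < x ^ 16 - 1 := by omega
    simpa [hl₁, hm₁] using this
  · have : 16 * x ^ 4 * x ^ 10 ≤ (x ^ 16 - 1) * (16 * x ^ 2) := by
      rw [Nat.sub_mul]
      ring_nf
      omega
    simpa [count_true_subw, count_replicate, hl₀, hn₀, hl₁, hm₁] using this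

lemma length_a_lt_length_d (hl : ∀ i, l i = 2 ^ (2 * 2 ^ i + 4))
    (hm : ∀ i, m i = 2 ^ (8 * 2 ^ i)) (hn : ∀ i, n i = 2 ^ (10 * 2 ^ i)) (i : ℕ) :
    (hatComp l m n (i + 1) 0 []).length <
      (hatComp l m n i 0 (replicate (n i - 1) true)).length := by
  rcases i with _ | j
  · simp only [hatComp, length_hatw, count_true_subw, length_replicate, hl, hm, hn]
    norm_num
  obtain ⟨x, hx, hl₀, -, hn₀, hl₁, hm₁, hn₁⟩ := exists_eq_pow_of_eq_two_pow hl hm hn j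
  have h₁ := two_pow_mul_pow_le_pow hx (show 0 ≤ 4 by norm_num)
  have h₂ := two_pow_mul_pow_le_pow hx (show 4 ≤ 16 by norm_num)
  have h₃ := two_pow_mul_pow_le_pow hx (show 16 ≤ 20 by norm_num)
  have h₄ := two_pow_mul_pow_le_pow hx (show 10 ≤ 14 by norm_num)
  have h₅ := two_pow_mul_pow_le_pow hx (show 14 ≤ 18 by norm_num)
  have h₆ := two_pow_mul_pow_le_pow hx (show 18 ≤ 30 by norm_num)
  norm_num at h₁ h₂ h₃ h₄ h₅ h₆
  rw [hatComp_succ_eq]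
  refine length_hatComp_succ_lt (fun h => by rw [hm]; positivity) ?_ ?_
  · have : x ^ 16 + 2 * (16 * x ^ 4) < x ^ 20 - 1 := by omega
    simpa [length_hatw, count_true_subw, hl₁, hm₁, hn₁] using this
  · have : x ^ 16 * (16 * x ^ 2) + 2 * (16 * x ^ 4) * x ^ 10 ≤ (x ^ 20 - 1) * x ^ 10 := by
      rw [Nat.sub_mul]
      ring_nf
      omega
    simpa [count_true_subw, count_true_hatw, count_false_hatw, count_replicate, hl₀, hn₀, hl₁,
      hm₁, hn₁] using this

end PowersOfTwo

theorem stmt17 (l m n : ℕ → ℕ) (hl : ∀ i, l i = 2 ^ (2 * 2 ^ i + 4))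
    (hm : ∀ i, m i = 2 ^ (8 * 2 ^ i)) (hn : ∀ i, n i = 2 ^ (10 * 2 ^ i)) (i : ℕ) :
    (hatComp l m n i 0 (List.replicate (l i) true)).length <
        (hatComp l m n i 0 (List.replicate (m i - 1) false)).length ∧
      (hatComp l m n i 0 (List.replicate (m i - 1) false)).length <
        (hatComp l m n (i + 1) 0 []).length ∧
      (hatComp l m n (i + 1) 0 []).length <
        (hatComp l m n i 0 (List.replicate (n i - 1) true)).length ∧
      (hatComp l m n i 0 (List.replicate (n i - 1) true)).length <
        (hatComp l m n (i + 1) 0 (List.replicate (l (i + 1)) true)).length := by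
  have m_pos : ∀ h, 0 < m h := fun h => by rw [hm]; positivity
  exact ⟨length_b_lt_length_c hl hm hn i, length_c_lt_length_a m_pos i 0,
    length_a_lt_length_d hl hm hn i, length_d_lt_length_b m_pos (by rw [hl]; positivity)⟩
end
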